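/- Templates desugar to well-typed terms: if a template t is well-typed with element type τ in template context (judgment Γ, tpl τ ⊢ t : List τ, defined by the template typing rules), then its desugaring ⟦t⟧ satisfies Γ ⊢ ⟦t⟧ : List τ in the underlying typed lambda calculus. -/
import Mathlib


/-- Types of the underlying simply-typed calculus. -/
inductive Ty where
  | str
  | bool
  | list (τ : Ty)
deriving DecidableEq

/-- Terms of the underlying calculus: strings, variables, let, lists,
append, flatten, map (with an explicit binder), if-then-else, and a
coercion of string literals into the template element type. -/
inductive Expr where
  | lit (s : String)
  | coerce (s : String) (τ : Ty)   -- coerce the string `s` to type `τ`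
  | var (x : String)
  | lett (x : String) (e1 e2 : Expr)
  | nil
  | cons (hd tl : Expr)
  | append (e1 e2 : Expr)
  | flatten (e : Expr)
  | mapE (x : String) (body : Expr) (e : Expr)  -- map (λ x. body) e
  | ite (c e1 e2 : Expr)

abbrev Ctx := List (String × Ty)

/-- Typing judgment `Γ ⊢ e : τ` of the underlying calculus. -/
inductive HasTy : Ctx → Expr → Ty → Prop where
  | lit {Γ s} : HasTy Γ (.lit s) .str
  | coerce {Γ s τ} : HasTy Γ (.coerce s τ) τ
  | var {Γ x τ} : (x, τ) ∈ Γ → HasTy Γ (.var x) τ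
  | lett {Γ x e1 e2 τ1 τ2} :
      HasTy Γ e1 τ1 → HasTy ((x, τ1) :: Γ) e2 τ2 →
      HasTy Γ (.lett x e1 e2) τ2
  | nil {Γ τ} : HasTy Γ .nil (.list τ)
  | cons {Γ hd tl τ} :
      HasTy Γ hd τ → HasTy Γ tl (.list τ) → HasTy Γ (.cons hd tl) (.list τ)
  | append {Γ e1 e2 τ} :
      HasTy Γ e1 (.list τ) → HasTy Γ e2 (.list τ) →
      HasTy Γ (.append e1 e2) (.list τ)
  | flatten {Γ e τ} :
      HasTy Γ e (.list (.list τ)) → HasTy Γ (.flatten e) (.list τ)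
  | mapE {Γ x body e τe τ} :
      HasTy Γ e (.list τe) → HasTy ((x, τe) :: Γ) body τ →
      HasTy Γ (.mapE x body e) (.list τ)
  | ite {Γ c e1 e2 τ} :
      HasTy Γ c .bool → HasTy Γ e1 τ → HasTy Γ e2 τ →
      HasTy Γ (.ite c e1 e2) τ

/-- Template parts; a template is a list of parts. -/
inductive TplPart where
  | str (s : String)
  | expr (e : Expr)
  | set (x : String) (e : Expr)
  | splice (e : Expr)
  | tif (c : Expr) (t1 t2 : List TplPart)
  | foreach (x : String) (e : Expr) (t : List TplPart)

/-- Desugaring of templates, in template element-type context `τ`. -/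
def desugar (τ : Ty) : List TplPart → Expr
  | [] => .nil
  | .str s :: ps => .cons (.coerce s τ) (desugar τ ps)
  | .expr e :: ps => .cons e (desugar τ ps)
  | .set x e :: ps => .lett x e (desugar τ ps)
  | .splice e :: ps => .append e (desugar τ ps)
  | .tif c t1 t2 :: ps =>
      .append (.ite c (desugar τ t1) (desugar τ t2)) (desugar τ ps)
  | .foreach x e t :: ps =>
      .append (.flatten (.mapE x (desugar τ t) e)) (desugar τ ps)

/-- Template typing judgment `Γ, tpl τ ⊢ t : List τ`, mirroring the
desugaring. -/
inductive TplTy : Ctx → Ty → List TplPart → Prop where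
  | nil {Γ τ} : TplTy Γ τ []
  | str {Γ τ s ps} : TplTy Γ τ ps → TplTy Γ τ (.str s :: ps)
  | expr {Γ τ e ps} :
      HasTy Γ e τ → TplTy Γ τ ps → TplTy Γ τ (.expr e :: ps)
  | set {Γ τ x e τe ps} :
      HasTy Γ e τe → TplTy ((x, τe) :: Γ) τ ps →
      TplTy Γ τ (.set x e :: ps)
  | splice {Γ τ e ps} :
      HasTy Γ e (.list τ) → TplTy Γ τ ps → TplTy Γ τ (.splice e :: ps)
  | tif {Γ τ c t1 t2 ps} :
      HasTy Γ c .bool → TplTy Γ τ t1 → TplTy Γ τ t2 → TplTy Γ τ ps →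
      TplTy Γ τ (.tif c t1 t2 :: ps)
  | foreach {Γ τ x e τe t ps} :
      HasTy Γ e (.list τe) → TplTy ((x, τe) :: Γ) τ t → TplTy Γ τ ps →
      TplTy Γ τ (.foreach x e t :: ps)

/-- Templates desugar to well-typed terms: if `Γ, tpl τ ⊢ t : List τ`
then `Γ ⊢ ⟦t⟧ : List τ`. -/
theorem desugar_well_typed {Γ : Ctx} {τ : Ty} {t : List TplPart}
    (h : TplTy Γ τ t) : HasTy Γ (desugar τ t) (.list τ) := by
  induction h with
  | nil => simp only [desugar]; exact .nil
  | str _ ih => simp only [desugar]; exact .cons .coerce ih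
  | expr he _ ih => simp only [desugar]; exact .cons he ih
  | set he _ ih => simp only [desugar]; exact .lett he ih
  | splice he _ ih => simp only [desugar]; exact .append he ih
  | tif hc _ _ _ ih1 ih2 ih3 => simp only [desugar]; exact .append (.ite hc ih1 ih2) ih3
  | foreach he _ _ ih1 ih2 => simp only [desugar]; exact .append (.flatten (.mapE he ih1)) ih2
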